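/- arXiv:1407.5567 — 2 statements merged into one kernel-verified Lean document; each statement's English description precedes it below -/
import Mathlib

section
/- For every natural number n ≥ 1 and every s > 0 real, the integral ∫₀^∞ |μ(t)| · t^{s-1} · |log t|^n dt is finite, where μ(t) = -(2+t)·e^{t}/(e^{t}-1)^2 + 2t·e^{2t}/(e^{t}-1)^3. -/
/-!
Up to the factor `exp t / (exp t - 1)³`, `μ` has numerator `(t - 2) exp t + t + 2 = t³/6 + O(t⁴)`,
so `μ` is bounded near `0`, and it decays like `t exp (-t)` at `∞`. Multiplying by `(log t)ⁿ` only
costs an arbitrarily small power of `t` at either end, so `(log t)ⁿ μ(t)` is `O(t^(-s/2))` at `0`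
and `O(t^(-s-1))` at `∞`, and its Mellin integral at `s` converges.
-/

open Real MeasureTheory Set Filter Asymptotics Topology

noncomputable def stieltjesMu (t : ℝ) : ℝ :=
  -(2 + t) * exp t / (exp t - 1) ^ 2 + 2 * t * exp (2 * t) / (exp t - 1) ^ 3

lemma exp_sub_one_ne_zero {t : ℝ} (ht : t ≠ 0) : exp t - 1 ≠ 0 :=
  sub_ne_zero.2 fun h => ht (exp_eq_one_iff t |>.1 h)

lemma stieltjesMu_eq {t : ℝ} (ht : t ≠ 0) :
    stieltjesMu t = exp t * ((t - 2) * exp t + t + 2) / (exp t - 1) ^ 3 := by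
  have := exp_sub_one_ne_zero ht
  rw [stieltjesMu, two_mul t, exp_add]
  field_simp
  ring

lemma continuousOn_stieltjesMu : ContinuousOn stieltjesMu {0}ᶜ := by
  have hne : ∀ t ∈ ({0}ᶜ : Set ℝ), exp t - 1 ≠ 0 := fun t ht => exp_sub_one_ne_zero ht
  unfold stieltjesMu
  exact ((by fun_prop : Continuous _).continuousOn.div (by fun_prop)
      fun t ht => pow_ne_zero 2 (hne t ht)).add
    ((by fun_prop : Continuous _).continuousOn.div (by fun_prop)
      fun t ht => pow_ne_zero 3 (hne t ht))

/-- The numerator of `stieltjesMu` is `t³/6 + O(t⁴)` at `0`, which compensates the pole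
`(exp t - 1)⁻³`; the proof expands `exp (-t)` to third order. -/
lemma abs_sub_two_mul_exp_add_le {t : ℝ} (h0 : 0 ≤ t) (h1 : t ≤ 1) :
    |(t - 2) * exp t + t + 2| ≤ t ^ 3 * exp t := by
  have hb := exp_bound (x := -t) (by rwa [abs_neg, abs_of_nonneg h0]) (n := 4) (by norm_num)
  simp only [abs_neg, abs_of_nonneg h0, Finset.sum_range_succ, Finset.sum_range_zero,
    Nat.factorial] at hb
  obtain ⟨hl, hr⟩ := abs_le.1 hb
  have ht4 : t ^ 4 ≤ t ^ 3 := pow_le_pow_of_le_one h0 h1 (by norm_num)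
  have ht2 : 0 ≤ t + 2 := by linarith
  have hkey : |t - 2 + (t + 2) * exp (-t)| ≤ t ^ 3 := by
    rw [abs_le]
    constructor <;>
      nlinarith [mul_le_mul_of_nonneg_left hr ht2, mul_le_mul_of_nonneg_left hl ht2,
        pow_nonneg h0 3, pow_nonneg h0 4]
  have heq : (t - 2) * exp t + t + 2 = (t - 2 + (t + 2) * exp (-t)) * exp t := by
    rw [exp_neg]
    field_simp
    ring
  rw [heq, abs_mul, abs_of_pos (exp_pos t)]
  exact mul_le_mul_of_nonneg_right hkey (exp_pos t).le

lemma abs_stieltjesMu_le_of_le_one {t : ℝ} (h0 : 0 < t) (h1 : t ≤ 1) :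
    |stieltjesMu t| ≤ 9 := by
  have hE : 0 < exp t := exp_pos t
  have hE1 : t ≤ exp t - 1 := by linarith [add_one_le_exp t]
  have hEpos : 0 < exp t - 1 := h0.trans_le hE1
  have hcube : t ^ 3 ≤ (exp t - 1) ^ 3 := pow_le_pow_left₀ h0.le hE1 3
  have hE3 : exp t ≤ 3 :=
    (exp_le_exp.2 h1).trans (by linarith [exp_one_lt_d9])
  have hN := abs_sub_two_mul_exp_add_le h0.le h1
  rw [stieltjesMu_eq h0.ne', abs_div, abs_mul, abs_of_pos hE, abs_of_pos (pow_pos hEpos 3),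
    div_le_iff₀ (pow_pos hEpos 3)]
  nlinarith [mul_le_mul_of_nonneg_left hN hE.le, pow_nonneg h0.le 3,
    mul_le_mul_of_nonneg_left hE3 (mul_nonneg (pow_nonneg h0.le 3) hE.le)]

lemma abs_stieltjesMu_le_of_one_le {t : ℝ} (h1 : 1 ≤ t) :
    |stieltjesMu t| ≤ 48 * t * exp (-t) := by
  have h0 : 0 < t := one_pos.trans_le h1
  have hE : 0 < exp t := exp_pos t
  have hE2 : 2 ≤ exp t := by linarith [add_one_le_exp t]
  have hEpos : 0 < exp t - 1 := by linarith
  have hN : |(t - 2) * exp t + t + 2| ≤ 6 * t * exp t := by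
    rw [abs_le]
    constructor <;> nlinarith [mul_le_mul_of_nonneg_left hE2 h0.le]
  have hcube : (exp t / 2) ^ 3 ≤ (exp t - 1) ^ 3 :=
    pow_le_pow_left₀ (by positivity) (by linarith) 3
  rw [stieltjesMu_eq h0.ne', exp_neg, abs_div, abs_mul, abs_of_pos hE,
    abs_of_pos (pow_pos hEpos 3), ← div_eq_mul_inv, div_le_div_iff₀ (pow_pos hEpos 3) hE]
  nlinarith [mul_le_mul_of_nonneg_left hN hE.le,
    mul_le_mul_of_nonneg_left hcube (by positivity : (0:ℝ) ≤ 48 * t),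
    abs_nonneg ((t - 2) * exp t + t + 2)]

lemma stieltjesMu_isBigO_one_nhdsGT_zero : stieltjesMu =O[𝓝[>] 0] fun _ => (1 : ℝ) := by
  refine IsBigO.of_bound 9 ?_
  filter_upwards [Ioc_mem_nhdsGT one_pos] with t ⟨h0, h1⟩
  simpa using abs_stieltjesMu_le_of_le_one h0 h1

lemma stieltjesMu_isBigO_rpow_atTop (a : ℝ) : stieltjesMu =O[atTop] (· ^ (-a)) := by
  have hdecay : stieltjesMu =O[atTop] fun t => t * exp (-1 * t) := by
    refine IsBigO.of_bound 48 ?_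
    filter_upwards [eventually_ge_atTop 1] with t ht
    rw [norm_mul, norm_of_nonneg (zero_le_one.trans ht), norm_of_nonneg (exp_pos _).le,
      neg_one_mul, ← mul_assoc]
    exact abs_stieltjesMu_le_of_one_le ht
  refine hdecay.trans (((isBigO_refl _ _).mul
    (isLittleO_exp_neg_mul_rpow_atTop one_pos (-a - 1)).isBigO).congr' .rfl ?_)
  filter_upwards [eventually_gt_atTop 0] with t ht
  rw [mul_comm, ← rpow_add_one ht.ne', sub_add_cancel]

lemma isBigO_rpow_nhdsGT_zero_of_le {a b : ℝ} (hab : a ≤ b) :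
    (fun t : ℝ => t ^ (-a)) =O[𝓝[>] 0] (· ^ (-b)) := by
  refine IsBigO.of_bound 1 ?_
  filter_upwards [Ioc_mem_nhdsGT one_pos] with t ⟨h0, h1⟩
  rw [one_mul, norm_of_nonneg (rpow_nonneg h0.le _), norm_of_nonneg (rpow_nonneg h0.le _)]
  exact rpow_le_rpow_of_exponent_ge h0 h1 (neg_le_neg hab)

lemma isBigO_log_pow_mul_rpow_nhdsGT_zero {f : ℝ → ℝ} {a : ℝ}
    (hf : f =O[𝓝[>] 0] fun t => t ^ (-a)) (n : ℕ) {b : ℝ} (hab : a < b) :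
    (fun t => log t ^ n * f t) =O[𝓝[>] 0] (· ^ (-b)) := by
  induction n generalizing b with
  | zero => simpa using hf.trans (isBigO_rpow_nhdsGT_zero_of_le hab.le)
  | succ n ih =>
    simpa only [smul_eq_mul, ← mul_assoc, ← pow_succ'] using
      isBigO_rpow_zero_log_smul (add_div_two_lt_right.2 hab) (ih (left_lt_add_div_two.2 hab))

lemma isBigO_log_pow_mul_rpow_atTop {f : ℝ → ℝ} (hf : ∀ a : ℝ, f =O[atTop] fun t => t ^ (-a))
    (n : ℕ) (a : ℝ) : (fun t => log t ^ n * f t) =O[atTop] (· ^ (-a)) := by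
  induction n generalizing a with
  | zero => simpa using hf a
  | succ n ih =>
    simpa only [smul_eq_mul, ← mul_assoc, ← pow_succ'] using
      isBigO_rpow_top_log_smul (lt_add_one a) (ih (a + 1))

theorem stieltjes_stmt4_general (n : ℕ) (s : ℝ) (hs : 0 < s) :
    MeasureTheory.IntegrableOn
      (fun t : ℝ => |(-(2 + t) * Real.exp t / (Real.exp t - 1) ^ 2
          + 2 * t * Real.exp (2 * t) / (Real.exp t - 1) ^ 3)|
        * t ^ (s - 1) * |Real.log t| ^ n)
      (Set.Ioi 0) := by
  set g : ℝ → ℝ := fun t => log t ^ n * stieltjesMu t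
  have hg_cont : ContinuousOn g (Ioi 0) :=
    ((continuousOn_log.pow n).mul continuousOn_stieltjesMu).mono fun t ht => ne_of_gt ht
  have hg_zero : g =O[𝓝[>] 0] (· ^ (-(s / 2))) :=
    isBigO_log_pow_mul_rpow_nhdsGT_zero (a := 0)
      (by simpa using stieltjesMu_isBigO_one_nhdsGT_zero) n (half_pos hs)
  have hg_top : g =O[atTop] (· ^ (-(s + 1))) :=
    isBigO_log_pow_mul_rpow_atTop stieltjesMu_isBigO_rpow_atTop n _
  have hmellin := mellin_convergent_of_isBigO_scalar
    (hg_cont.locallyIntegrableOn measurableSet_Ioi).norm hg_top.norm_left (lt_add_one s)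
    hg_zero.norm_left (half_lt_self hs)
  refine hmellin.congr_fun (fun t _ => ?_) measurableSet_Ioi
  simp only [g, stieltjesMu, norm_mul, norm_pow, norm_eq_abs]
  ring

theorem stieltjes_stmt4 (n : ℕ) (hn : 1 ≤ n) (s : ℝ) (hs : 0 < s) :
    MeasureTheory.IntegrableOn
      (fun t : ℝ => |(-(2 + t) * Real.exp t / (Real.exp t - 1) ^ 2
          + 2 * t * Real.exp (2 * t) / (Real.exp t - 1) ^ 3)|
        * t ^ (s - 1) * |Real.log t| ^ n)
      (Set.Ioi 0) :=
  stieltjes_stmt4_general n s hs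
end

section
/- For real s > 1 and real a with 0 < a ≤ 1, (s-1)·ζ(s,a)·Γ(s) = ∫₀^∞ ψ(t)·e^{-(a-1)t}·t^{s-1} dt, where ψ(t) = t·e^{t}/(e^{t}-1)^2 - 1/(e^{t}-1) + (a-1)·t/(e^{t}-1) and ζ(s,a) = Σ_{n≥0} 1/(n+a)^s is the Hurwitz zeta function. -/
/-!
With `c = n + a`, the summand `t ^ (s - 1) * (c * t - 1) * exp (-(c * t))` integrates over
`(0, ∞)` to `c * Γ(s + 1) / c ^ (s + 1) - Γ(s) / c ^ s = (s - 1) * Γ(s) / c ^ s`, so summing over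
`n` gives the left-hand side. Summing over `n` under the integral instead, the geometric series
`∑ e^{-(n+1)t} = 1 / (e^t - 1)` and its derivative `∑ (n+1) e^{-(n+1)t} = e^t / (e^t - 1) ^ 2`
produce the integrand on the right. The interchange is justified because the integrals of the
absolute values are bounded by `(s + 1) * Γ(s) / (n + a) ^ s`, which is summable as `s > 1`.
-/

open MeasureTheory Set Real

section GammaIntegrals

variable {s c : ℝ}

lemma integrableOn_rpow_mul_exp_neg_mul (hs : -1 < s) (hc : 0 < c) :
    IntegrableOn (fun t : ℝ => t ^ s * exp (-(c * t))) (Ioi 0) := by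
  simpa [rpow_one] using integrableOn_rpow_mul_exp_neg_mul_rpow hs one_pos hc

lemma integral_rpow_sub_one_mul_exp_neg_mul (hs : 0 < s) (hc : 0 < c) :
    ∫ t in Ioi (0 : ℝ), t ^ (s - 1) * exp (-(c * t)) = Gamma s / c ^ s := by
  rw [integral_rpow_mul_exp_neg_mul_Ioi hs hc, div_rpow zero_le_one hc.le, one_rpow]
  ring

lemma mul_integral_rpow_mul_exp_neg_mul (hs : 0 < s) (hc : 0 < c) :
    c * ∫ t in Ioi (0 : ℝ), t ^ s * exp (-(c * t)) = s * Gamma s / c ^ s := by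
  have h := integral_rpow_sub_one_mul_exp_neg_mul (s := s + 1) (by linarith) hc
  rw [add_sub_cancel_right] at h
  rw [h, Gamma_add_one hs.ne', rpow_add_one hc.ne']
  field_simp

end GammaIntegrals

/-- On `t > 0` this is `t ^ (s - 1) * (c * t - 1) * exp (-(c * t))`, written as a difference of two
Gamma integrands. -/
noncomputable def gammaIntegrandDiff (s c t : ℝ) : ℝ :=
  c * (t ^ s * exp (-(c * t))) - t ^ (s - 1) * exp (-(c * t))

section GammaIntegrandDiff

variable {s c : ℝ}

lemma integrableOn_gammaIntegrandDiff (hs : 0 < s) (hc : 0 < c) :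
    IntegrableOn (gammaIntegrandDiff s c) (Ioi 0) :=
  ((integrableOn_rpow_mul_exp_neg_mul (by linarith) hc).const_mul c).sub
    (integrableOn_rpow_mul_exp_neg_mul (by linarith) hc)

lemma integral_gammaIntegrandDiff (hs : 0 < s) (hc : 0 < c) :
    ∫ t in Ioi (0 : ℝ), gammaIntegrandDiff s c t = (s - 1) * Gamma s / c ^ s := by
  unfold gammaIntegrandDiff
  rw [integral_sub ((integrableOn_rpow_mul_exp_neg_mul (s := s) (by linarith) hc).const_mul c)
    (integrableOn_rpow_mul_exp_neg_mul (by linarith) hc), integral_const_mul,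
    mul_integral_rpow_mul_exp_neg_mul hs hc, integral_rpow_sub_one_mul_exp_neg_mul hs hc]
  ring

lemma integral_norm_gammaIntegrandDiff_le (hs : 0 < s) (hc : 0 < c) :
    ∫ t in Ioi (0 : ℝ), ‖gammaIntegrandDiff s c t‖ ≤ (s + 1) * Gamma s / c ^ s := by
  have hpos := (integrableOn_rpow_mul_exp_neg_mul (s := s) (by linarith) hc).const_mul c
  have hneg := integrableOn_rpow_mul_exp_neg_mul (s := s - 1) (by linarith) hc
  calc ∫ t in Ioi (0 : ℝ), ‖gammaIntegrandDiff s c t‖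
      ≤ ∫ t in Ioi (0 : ℝ), c * (t ^ s * exp (-(c * t))) + t ^ (s - 1) * exp (-(c * t)) := by
        refine setIntegral_mono_on (integrableOn_gammaIntegrandDiff hs hc).norm
          (hpos.add hneg) measurableSet_Ioi fun t (ht : 0 < t) => ?_
        refine (norm_sub_le _ _).trans_eq ?_
        rw [norm_of_nonneg (by positivity), norm_of_nonneg (by positivity)]
    _ = (s + 1) * Gamma s / c ^ s := by
        rw [integral_add hpos hneg, integral_const_mul, mul_integral_rpow_mul_exp_neg_mul hs hc,
          integral_rpow_sub_one_mul_exp_neg_mul hs hc]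
        ring

end GammaIntegrandDiff

section ExpSeries

variable {t : ℝ}

lemma hasSum_exp_neg_succ_mul (ht : 0 < t) :
    HasSum (fun n : ℕ => exp (-((n + 1) * t))) (1 / (exp t - 1)) := by
  have hx : exp (-t) < 1 := exp_lt_one_iff.2 (neg_lt_zero.2 ht)
  have hterm (n : ℕ) : exp (-((n + 1) * t)) = exp (-t) * exp (-t) ^ n := by
    rw [← exp_nat_mul, ← exp_add]; ring_nf
  have hval : 1 / (exp t - 1) = exp (-t) * (1 - exp (-t))⁻¹ := by
    have : exp t - 1 ≠ 0 := (sub_pos.2 (one_lt_exp_iff.2 ht)).ne'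
    rw [exp_neg]
    field_simp
  simpa only [hterm, hval] using (hasSum_geometric_of_lt_one (exp_pos _).le hx).mul_left _

lemma hasSum_succ_mul_exp_neg_succ_mul (ht : 0 < t) :
    HasSum (fun n : ℕ => ((n : ℝ) + 1) * exp (-((n + 1) * t))) (exp t / (exp t - 1) ^ 2) := by
  have hx : ‖exp (-t)‖ < 1 := by
    rw [norm_of_nonneg (exp_pos _).le]; exact exp_lt_one_iff.2 (neg_lt_zero.2 ht)
  have hterm (n : ℕ) :
      ((n : ℝ) + 1) * exp (-((n + 1) * t)) = ((n + 1 : ℕ) : ℝ) * exp (-t) ^ (n + 1) := by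
    rw [← exp_nat_mul]; push_cast; ring_nf
  have hval : exp t / (exp t - 1) ^ 2 = exp (-t) / (1 - exp (-t)) ^ 2 := by
    have : exp t - 1 ≠ 0 := (sub_pos.2 (one_lt_exp_iff.2 ht)).ne'
    rw [exp_neg]
    field_simp
  have h := (hasSum_nat_add_iff' (f := fun n : ℕ => (n : ℝ) * exp (-t) ^ n) 1).mpr
    (hasSum_coe_mul_geometric_of_norm_lt_one hx)
  simpa only [hterm, hval, Finset.sum_range_one, Nat.cast_zero, zero_mul, sub_zero] using h

lemma hasSum_gammaIntegrandDiff_nat_add (s a : ℝ) (ht : 0 < t) :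
    HasSum (fun n : ℕ => gammaIntegrandDiff s (n + a) t)
      ((t * exp t / (exp t - 1) ^ 2 - 1 / (exp t - 1) + (a - 1) * t / (exp t - 1))
        * exp (-(a - 1) * t) * t ^ (s - 1)) := by
  have hterm (n : ℕ) : gammaIntegrandDiff s (n + a) t =
      (t * (((n : ℝ) + 1) * exp (-((n + 1) * t))) + ((a - 1) * t - 1) * exp (-((n + 1) * t)))
        * exp (-(a - 1) * t) * t ^ (s - 1) := by
    have hpow : t ^ s = t ^ (s - 1) * t := by rw [← rpow_add_one ht.ne', sub_add_cancel]
    have hexp : exp (-((n + a) * t)) = exp (-((n + 1) * t)) * exp (-(a - 1) * t) := by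
      rw [← exp_add]; ring_nf
    rw [gammaIntegrandDiff, hpow, hexp]
    ring
  have hval : t * exp t / (exp t - 1) ^ 2 - 1 / (exp t - 1) + (a - 1) * t / (exp t - 1) =
      t * (exp t / (exp t - 1) ^ 2) + ((a - 1) * t - 1) * (1 / (exp t - 1)) := by
    ring
  simp only [hterm, hval]
  exact ((((hasSum_succ_mul_exp_neg_succ_mul ht).mul_left t).add
    ((hasSum_exp_neg_succ_mul ht).mul_left _)).mul_right _).mul_right _

end ExpSeries

theorem stieltjes_stmt19_general (s a : ℝ) (hs : 1 < s) (ha : 0 < a) :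
    (s - 1) * (∑' n : ℕ, 1 / ((n : ℝ) + a) ^ s) * Real.Gamma s =
      ∫ t in Set.Ioi (0 : ℝ),
        (t * Real.exp t / (Real.exp t - 1) ^ 2 - 1 / (Real.exp t - 1)
            + (a - 1) * t / (Real.exp t - 1))
          * Real.exp (-(a - 1) * t) * t ^ (s - 1) := by
  have hs0 : 0 < s := by linarith
  have hc (n : ℕ) : 0 < (n : ℝ) + a := by positivity
  have hζ : Summable fun n : ℕ => 1 / ((n : ℝ) + a) ^ s :=
    ((summable_one_div_nat_add_rpow a s).mpr hs).congr fun n => by rw [abs_of_pos (hc n)]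
  have hsum := hasSum_integral_of_summable_integral_norm (μ := volume.restrict (Ioi 0))
    (fun n => integrableOn_gammaIntegrandDiff hs0 (hc n))
    (.of_nonneg_of_le (fun _ => integral_nonneg fun _ => norm_nonneg _)
      (fun n => integral_norm_gammaIntegrandDiff_le hs0 (hc n))
      (by simpa only [mul_one_div] using hζ.mul_left ((s + 1) * Gamma s)))
  simp only [integral_gammaIntegrandDiff hs0 (hc _)] at hsum
  rw [setIntegral_congr_fun measurableSet_Ioi
    fun t ht => (hasSum_gammaIntegrandDiff_nat_add s a ht).tsum_eq] at hsum
  rw [← hsum.tsum_eq, mul_right_comm, ← tsum_mul_left]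
  simp only [mul_one_div]

theorem stieltjes_stmt19 (s a : ℝ) (hs : 1 < s) (ha : 0 < a) (ha1 : a ≤ 1) :
    (s - 1) * (∑' n : ℕ, 1 / ((n : ℝ) + a) ^ s) * Real.Gamma s =
      ∫ t in Set.Ioi (0 : ℝ),
        (t * Real.exp t / (Real.exp t - 1) ^ 2 - 1 / (Real.exp t - 1)
            + (a - 1) * t / (Real.exp t - 1))
          * Real.exp (-(a - 1) * t) * t ^ (s - 1) :=
  stieltjes_stmt19_general s a hs ha
end
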